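/- Let (W,S) be a Coxeter group, w ∈ W, (s,t) ∈ 𝔐, and suppose reduced expressions →a, →b for w satisfy: →b is obtained from →a by an (s,t)-braid move, with Invs →b obtained from Invs →a by replacing a factor q ρ_{s,t} q⁻¹ (for some q ∈ W) by its reversal. Set s'=qsq⁻¹, t'=qtq⁻¹. If (u,v) ∈ 𝔑 satisfies (u,v) ≠ (s',t') and (u,v) ≠ (t',s'), then has_{u,v} →b = has_{u,v} →a. -/

import Mathlib

/-!
Write `s' = q s q⁻¹`, `t' = q t q⁻¹` and `m = m_{s,t}`. The two inversion sequences differ only by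
the reversal of the block `ρ_{s',t'}`, so an occurrence of `ρ_{u,v}` meeting the block in at most
one entry survives the move, in either direction. If it meets the block in two consecutive entries
`(uv)^k u` and `(uv)^{k+1} u`, then `uv` is a power of `s't'` and `u`, `v` lie in the dihedral group
`q⟨s, t⟩q⁻¹`. As `(u, v)` is conjugate to a pair of simple reflections, Kilmoyer's theorem (a
conjugate of a rank-two standard parabolic subgroup lying inside another one is all of it) shows
that `uv` has order `m`. Then every entry of `ρ_{u,v}` lies in the block, and since the inversion sequence of
a reduced word has no repetitions, `ρ_{u,v}` is the whole block, i.e. `(u, v) = (s', t')`.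

The exchange and deletion conditions behind Kilmoyer's theorem come from Tits' sign representation
of `W` on `W × {±1}`: the parity of the number of occurrences of a reflection in an inversion
sequence depends only on the product of the word.
-/

open scoped Classical

/-- The word `(s, t, s, t, …)` with `m` letters. -/
def altList {α : Type*} (s t : α) (m : ℕ) : List α :=
  (List.range m).map (fun k => if k % 2 = 0 then s else t)

/-- The word `ρ_{s,t} = ((st)^0 s, (st)^1 s, …, (st)^{m-1} s)`. -/
def rhoWord {W : Type*} [Group W] (s t : W) (m : ℕ) : List W :=
  (List.range m).map (fun k => (s * t) ^ k * s)

/-- `b` is obtained from `a` by an `(s_i, s_j)`-braid move. -/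
def IsBraidMove {B W : Type*} [Group W] {M : CoxeterMatrix B}
    (cs : CoxeterSystem M W) (i j : B) (a b : List B) : Prop :=
  i ≠ j ∧ M.M i j ≠ 0 ∧
  ∃ p : ℕ, p + M.M i j ≤ a.length ∧
    a = a.take p ++ altList i j (M.M i j) ++ a.drop (p + M.M i j) ∧
    b = a.take p ++ altList j i (M.M i j) ++ a.drop (p + M.M i j)

/-- The set `𝔑 = ⋃_{x ∈ W} x 𝔐 x⁻¹`. -/
def NSet {B W : Type*} [Group W] {M : CoxeterMatrix B}
    (cs : CoxeterSystem M W) : Set (W × W) :=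
  {p | ∃ (x : W) (i j : B), i ≠ j ∧ M.M i j ≠ 0 ∧
    p.1 = x * cs.simple i * x⁻¹ ∧ p.2 = x * cs.simple j * x⁻¹}

/-- `has_{u,v} ω ∈ {0,1}` records whether `ρ_{u,v}` is a subword of `Invs ω`. -/
noncomputable def HasFn {B W : Type*} [Group W] {M : CoxeterMatrix B}
    (cs : CoxeterSystem M W) (ω : List B) : W × W → ℤ :=
  fun p => if List.Sublist (rhoWord p.1 p.2 (orderOf (p.1 * p.2))) (cs.leftInvSeq ω)
    then 1 else 0

open scoped List

section RhoWord

variable {G : Type*} [Group G]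

theorem orderOf_conj (g x : G) : orderOf (g * x * g⁻¹) = orderOf x :=
  orderOf_injective (MulAut.conj g).toMonoidHom (MulAut.conj g).injective x

theorem altList_succ {α : Type*} (s t : α) (n : ℕ) : altList s t (n + 1) = s :: altList t s n := by
  simp only [altList, List.range_succ_eq_map, List.map_cons, List.map_map, Nat.zero_mod,
    if_pos, Function.comp_def, List.cons.injEq, true_and]
  refine List.map_congr_left fun k _ => ?_
  by_cases hk : k % 2 = 0 <;> simp [hk, Nat.succ_mod_two_eq_zero_iff]

theorem prod_map_altList_two_mul {α H : Type*} [Monoid H] (f : α → H) (s t : α) (n : ℕ) :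
    ((altList s t (2 * n)).map f).prod = (f s * f t) ^ n := by
  induction n with
  | zero => simp [altList]
  | succ n ih =>
    rw [show 2 * (n + 1) = 2 * n + 1 + 1 by ring, altList_succ, altList_succ, pow_succ', ← ih]
    simp [mul_assoc]

@[simp]
theorem length_rhoWord (s t : G) (m : ℕ) : (rhoWord s t m).length = m := by
  simp [rhoWord]

@[simp]
theorem getElem_rhoWord (s t : G) (m k : ℕ) (hk : k < (rhoWord s t m).length) :
    (rhoWord s t m)[k] = (s * t) ^ k * s := by
  simp [rhoWord]

theorem rhoWord_succ (s t : G) (n : ℕ) :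
    rhoWord s t (n + 1) = s :: (rhoWord t s n).map (fun x => s * x * s) := by
  simp only [rhoWord, List.range_succ_eq_map, List.map_cons, List.map_map, pow_zero, one_mul,
    Function.comp_def, List.cons.injEq, true_and]
  refine List.map_congr_left fun k _ => ?_
  rw [pow_succ', mul_assoc s t, ← mul_pow_mul, mul_assoc, mul_assoc]

theorem rhoWord_add_of_pow_eq_one {s t : G} {m : ℕ} (h : (s * t) ^ m = 1) (n : ℕ) :
    rhoWord s t (m + n) = rhoWord s t m ++ rhoWord s t n := by
  simp [rhoWord, List.range_add, pow_add, h, Function.comp_def]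

theorem rhoWord_map_conj (g s t : G) (m : ℕ) :
    (rhoWord s t m).map (fun x => g * x * g⁻¹) = rhoWord (g * s * g⁻¹) (g * t * g⁻¹) m := by
  simp only [rhoWord, List.map_map, Function.comp_def]
  refine List.map_congr_left fun k _ => ?_
  rw [show g * s * g⁻¹ * (g * t * g⁻¹) = g * (s * t) * g⁻¹ by group, conj_pow]
  group

theorem rhoWord_reverse {s t : G} {m : ℕ} (hs : s * s = 1) (ht : t * t = 1)
    (h : (s * t) ^ m = 1) : (rhoWord s t m).reverse = rhoWord t s m := by
  refine List.ext_getElem (by simp) fun k hk _ => ?_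
  have hkm : k < m := by simpa using hk
  have hpow : (s * t) ^ (m - 1 - k) = (t * s) ^ (k + 1) := by
    have hone : (s * t) ^ (m - 1 - k) * (s * t) ^ (k + 1) = 1 := by
      rw [← pow_add, show m - 1 - k + (k + 1) = m by omega, h]
    rw [eq_inv_of_mul_eq_one_left hone, ← inv_pow, mul_inv_rev, inv_eq_of_mul_eq_one_right hs,
      inv_eq_of_mul_eq_one_right ht]
  simp only [List.getElem_reverse, getElem_rhoWord, length_rhoWord, hpow]
  rw [pow_succ, mul_assoc, mul_assoc, hs, mul_one]

theorem mem_rhoWord_iff {s t x : G} {m : ℕ} (h : (s * t) ^ m = 1) (hm : 0 < m) :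
    x ∈ rhoWord s t m ↔ ∃ n : ℤ, x = (s * t) ^ n * s := by
  constructor
  · rintro hx
    obtain ⟨k, -, rfl⟩ := List.mem_map.1 hx
    exact ⟨k, by rw [zpow_natCast]⟩
  · rintro ⟨n, rfl⟩
    have hn : 0 ≤ n % (m : ℤ) := Int.emod_nonneg _ (by omega)
    have hnm : n % (m : ℤ) < m := Int.emod_lt_of_pos _ (by omega)
    refine List.mem_map.2 ⟨(n % m).toNat, List.mem_range.2 (by omega), ?_⟩
    rw [← zpow_natCast, Int.toNat_of_nonneg hn, ← zpow_eq_zpow_emod' n h]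

theorem orderOf_eq_of_nodup_rhoWord {s t : G} {m : ℕ} (h : (s * t) ^ m = 1) (hm : 0 < m)
    (hnd : (rhoWord s t m).Nodup) : orderOf (s * t) = m := by
  refine (orderOf_eq_iff hm).2 ⟨h, fun k hk hk0 hone => ?_⟩
  have := (hnd.getElem_inj_iff (i := k) (j := 0) (hi := by simpa) (hj := by simpa)).1
    (by simp [hone])
  omega

theorem eq_of_rhoWord_eq {s t u v : G} {m : ℕ} (hm : 2 ≤ m) (h : rhoWord u v m = rhoWord s t m) :
    u = s ∧ v = t := by
  have h0 := congrArg (·[0]?) h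
  have h1 := congrArg (·[1]?) h
  simp only [rhoWord, List.getElem?_map, List.getElem?_range (by omega : 0 < m),
    List.getElem?_range (by omega : 1 < m), Option.map_some, Option.some.injEq, pow_zero,
    one_mul, pow_one] at h0 h1
  subst h0
  exact ⟨rfl, by simpa [mul_assoc] using h1⟩

theorem exists_zpow_of_consecutive_mem_rhoWord {s t u v : G} {m k : ℕ}
    (h₀ : (u * v) ^ k * u ∈ rhoWord s t m) (h₁ : (u * v) ^ (k + 1) * u ∈ rhoWord s t m) :
    ∃ D E : ℤ, u * v = (s * t) ^ D ∧ u = (s * t) ^ E * s := by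
  obtain ⟨a, -, ha⟩ := List.mem_map.1 h₀
  obtain ⟨b, -, hb⟩ := List.mem_map.1 h₁
  have huv : u * v = ((u * v) ^ (k + 1) * u) * ((u * v) ^ k * u)⁻¹ := by group
  refine ⟨(b : ℤ) - a, (a : ℤ) - ((b : ℤ) - a) * k, ?_, ?_⟩
  · rw [huv, ← ha, ← hb]; group
  · have hu : u = ((u * v) ^ k)⁻¹ * ((u * v) ^ k * u) := by group
    rw [hu, ← ha, huv, ← ha, ← hb]; group

theorem mem_rhoWord_of_eq_zpow {s t u v x : G} {m n : ℕ} {D E : ℤ} (h : (s * t) ^ m = 1)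
    (hm : 0 < m) (hD : u * v = (s * t) ^ D) (hE : u = (s * t) ^ E * s)
    (hx : x ∈ rhoWord u v n) : x ∈ rhoWord s t m := by
  obtain ⟨l, -, rfl⟩ := List.mem_map.1 hx
  refine (mem_rhoWord_iff h hm).2 ⟨D * l + E, ?_⟩
  rw [hD, ← zpow_natCast, ← zpow_mul, hE, ← mul_assoc, ← zpow_add, mul_comm D]

theorem mem_closure_pair_of_eq_zpow {s t u v : G} {D E : ℤ} (hD : u * v = (s * t) ^ D)
    (hE : u = (s * t) ^ E * s) :
    u ∈ Subgroup.closure {s, t} ∧ v ∈ Subgroup.closure {s, t} := by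
  have hs : s ∈ Subgroup.closure {s, t} := Subgroup.subset_closure (Set.mem_insert _ _)
  have hst : s * t ∈ Subgroup.closure {s, t} :=
    mul_mem hs (Subgroup.subset_closure (Set.mem_insert_of_mem _ rfl))
  have hu : u ∈ Subgroup.closure {s, t} := hE ▸ mul_mem (zpow_mem hst E) hs
  refine ⟨hu, ?_⟩
  rw [show v = u⁻¹ * (u * v) by group, hD]
  exact mul_mem (inv_mem hu) (zpow_mem hst D)

theorem conj_mem_closure_pair {q s t u : G} (hu : u ∈ Subgroup.closure {q * s * q⁻¹, q * t * q⁻¹}) :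
    q⁻¹ * u * q ∈ Subgroup.closure {s, t} := by
  have hle : Subgroup.closure {q * s * q⁻¹, q * t * q⁻¹} ≤
      (Subgroup.closure {s, t}).comap (MulAut.conj q⁻¹).toMonoidHom := by
    refine (Subgroup.closure_le _).2 ?_
    rintro _ (rfl | rfl) <;> simp [mul_assoc] <;> exact Subgroup.subset_closure (by simp)
  simpa using hle hu

end RhoWord

section Sublist

variable {α : Type*} {l X L Y : List α}

theorem sublist_append_reverse_or_exists_consecutive_mem (h : l <+ X ++ L ++ Y) :
    l <+ X ++ L.reverse ++ Y ∨ ∃ k, ∃ hk : k + 1 < l.length, l[k] ∈ L ∧ l[k + 1] ∈ L := by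
  rw [List.append_assoc] at h
  obtain ⟨l₁, l₂₃, rfl, h₁, h₂₃⟩ := List.sublist_append_iff.1 h
  obtain ⟨l₂, l₃, rfl, h₂, h₃⟩ := List.sublist_append_iff.1 h₂₃
  rw [List.append_assoc]
  match l₂, h₂ with
  | [], _ => exact .inl (h₁.append (h₃.trans (List.sublist_append_right _ _)))
  | [e], h₂ =>
    refine .inl (h₁.append (List.Sublist.append ?_ h₃))
    exact List.singleton_sublist.2 (List.mem_reverse.2 (h₂.subset (List.mem_singleton_self e)))
  | e₁ :: e₂ :: l₂, h₂ =>
    refine .inr ⟨l₁.length, by simp, ?_, ?_⟩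
    · simpa using h₂.subset (List.mem_cons_self ..)
    · simpa [List.getElem_append_right] using h₂.subset (by simp)

theorem sublist_of_sublist_append_append_of_forall_mem [DecidableEq α] (hnd : (X ++ L ++ Y).Nodup)
    (h : l <+ X ++ L ++ Y) (hl : ∀ x ∈ l, x ∈ L) : l <+ L := by
  have hXL := List.disjoint_of_nodup_append (List.nodup_append.1 hnd).1
  have hLY := List.disjoint_of_nodup_append hnd
  have hX : X.filter (· ∈ L) = [] :=
    List.filter_eq_nil_iff.2 (by simpa using fun x hxX hxL => hXL hxX hxL)
  have hY : Y.filter (· ∈ L) = [] :=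
    List.filter_eq_nil_iff.2 (by simpa using fun x hxY hxL => hLY (List.mem_append_right X hxL) hxY)
  have hfilter : (X ++ L ++ Y).filter (· ∈ L) = L := by
    rw [List.filter_append, List.filter_append, hX, hY, List.filter_eq_self.2 (by simp)]
    simp
  have hl' : l.filter (· ∈ L) = l := List.filter_eq_self.2 (by simpa using hl)
  rw [← hfilter, ← hl']
  exact h.filter _

end Sublist

namespace CoxeterSystem

variable {B W : Type*} [Group W] {M : CoxeterMatrix B} (cs : CoxeterSystem M W)

local prefix:100 "s" => cs.simple
local prefix:100 "π" => cs.wordProd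
local prefix:100 "ℓ" => cs.length
local prefix:100 "ris" => cs.rightInvSeq
local prefix:100 "lis" => cs.leftInvSeq

theorem rightInvSeq_eq_map_leftInvSeq (ω : List B) :
    ris ω = (lis ω).map (fun t => (π ω)⁻¹ * t * π ω) := by
  induction ω with
  | nil => rfl
  | cons c ω ih =>
    simp only [rightInvSeq, leftInvSeq, ih, List.map_cons, List.map_map, wordProd_cons,
      Function.comp_def, MulAut.conj_apply, inv_simple, List.cons.injEq]
    constructor
    · group
    · refine List.map_congr_left fun t _ => ?_
      simp [mul_assoc]

theorem leftInvSeq_altList (i j : B) (n : ℕ) : lis (altList i j n) = rhoWord (s i) (s j) n := by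
  induction n generalizing i j with
  | zero => rfl
  | succ n ih =>
    simp only [altList_succ, leftInvSeq, ih, rhoWord_succ]
    congr 2
    ext x
    simp

/-- The action of `s c` in Tits' sign representation of `W` on `W × ℤˣ`. -/
noncomputable def reflFlip (c : B) : Equiv.Perm (W × ℤˣ) :=
  Function.Involutive.toPerm (fun p => (s c * p.1 * s c, if p.1 = s c then -p.2 else p.2))
    (by
      rintro ⟨t, ε⟩
      by_cases h : t = s c <;> simp [h, mul_assoc, mul_eq_one_iff_eq_inv])

theorem reflFlip_apply (c : B) (t : W) (ε : ℤˣ) :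
    cs.reflFlip c (t, ε) = (s c * t * s c, if t = s c then -ε else ε) :=
  rfl

theorem prod_map_reflFlip_apply (ω : List B) (t : W) (ε : ℤˣ) :
    (ω.map cs.reflFlip).prod (t, ε) = (π ω * t * (π ω)⁻¹, ε * (-1) ^ (ris ω).count t) := by
  induction ω generalizing t ε with
  | nil => simp
  | cons c ω ih =>
    have hfix : π ω * t * (π ω)⁻¹ = s c ↔ (π ω)⁻¹ * s c * π ω = t := by
      constructor <;> intro h <;> rw [← h] <;> group
    simp only [List.map_cons, List.prod_cons, Equiv.Perm.mul_apply, ih]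
    simp only [reflFlip_apply, hfix, rightInvSeq, List.count_cons, beq_iff_eq, wordProd_cons]
    refine Prod.ext (by simp [mul_assoc]) ?_
    split_ifs <;> simp [pow_succ]

theorem isLiftable_reflFlip : M.IsLiftable cs.reflFlip := by
  intro i j
  have hπ : π (altList i j (2 * M i j)) = 1 := by
    rw [wordProd, prod_map_altList_two_mul, simple_mul_simple_pow]
  ext ⟨t, ε⟩ : 1
  -- the inversion sequence of `(s i s j) ^ M i j` lists `ρ_{s i, s j}` twice: no sign changes
  rw [← prod_map_altList_two_mul, prod_map_reflFlip_apply, rightInvSeq_eq_map_leftInvSeq, hπ,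
    leftInvSeq_altList, two_mul, rhoWord_add_of_pow_eq_one (cs.simple_mul_simple_pow i j)]
  simp [← two_mul, pow_mul]

noncomputable def signRep : W →* Equiv.Perm (W × ℤˣ) :=
  cs.lift ⟨cs.reflFlip, cs.isLiftable_reflFlip⟩

theorem signRep_wordProd (ω : List B) : cs.signRep (π ω) = (ω.map cs.reflFlip).prod := by
  simp [signRep, wordProd, map_list_prod, Function.comp_def, lift_apply_simple]

theorem even_count_rightInvSeq_iff {ω ω' : List B} (h : π ω = π ω') (t : W) :
    Even ((ris ω).count t) ↔ Even ((ris ω').count t) := by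
  have hsign := congrArg (fun w => (cs.signRep w (t, 1)).2) h
  simp only [signRep_wordProd, prod_map_reflFlip_apply, one_mul] at hsign
  rw [← neg_one_pow_eq_one_iff_even (R := ℤˣ) (by decide), hsign,
    neg_one_pow_eq_one_iff_even (by decide)]

theorem even_count_leftInvSeq_iff {ω ω' : List B} (h : π ω = π ω') (t : W) :
    Even ((lis ω).count t) ↔ Even ((lis ω').count t) := by
  rw [← List.count_reverse, ← rightInvSeq_reverse, ← List.count_reverse (l := lis ω'),
    ← rightInvSeq_reverse]
  exact cs.even_count_rightInvSeq_iff (by rw [wordProd_reverse, wordProd_reverse, h]) t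

theorem simple_mem_leftInvSeq_of_length_lt {ω : List B} {c : B}
    (h : ℓ (s c * π ω) < ℓ (π ω)) : s c ∈ lis ω := by
  obtain ⟨ζ, hζ, hζω⟩ := cs.exists_isReduced (s c * π ω)
  have hπ : π (c :: ζ) = π ω := by rw [wordProd_cons, ← hζω, simple_mul_simple_cancel_left]
  have hζc : s c ∉ lis ζ := fun hmem => by
    have hlt := (cs.isLeftInversion_of_mem_leftInvSeq hζ hmem).2
    rw [← hζω, simple_mul_simple_cancel_left] at hlt
    omega
  have hmap : ((lis ζ).map (MulAut.conj (s c))).count (s c) = (lis ζ).count (s c) := by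
    simpa using List.count_map_of_injective (lis ζ) _ (MulAut.conj (s c)).injective (s c)
  have hcount : (lis (c :: ζ)).count (s c) = 1 := by
    rw [leftInvSeq, List.count_cons, hmap, List.count_eq_zero.2 hζc]
    simp
  have hodd := (cs.even_count_leftInvSeq_iff hπ (s c)).not
  rw [hcount] at hodd
  exact List.count_pos_iff.1 (Nat.pos_of_ne_zero fun h0 => hodd.1 (by decide) (by simp [h0]))

theorem exists_eraseIdx_of_length_lt {ω : List B} {c : B} (h : ℓ (s c * π ω) < ℓ (π ω)) :
    ∃ k < ω.length, s c * π ω = π (ω.eraseIdx k) := by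
  obtain ⟨k, hk, hkc⟩ := List.getElem_of_mem (cs.simple_mem_leftInvSeq_of_length_lt h)
  refine ⟨k, by simpa using hk, ?_⟩
  rw [← getD_leftInvSeq_mul_wordProd, List.getD_eq_getElem _ _ hk, hkc]

theorem exists_reduced_sublist (ω : List B) :
    ∃ τ, τ <+ ω ∧ cs.IsReduced τ ∧ π τ = π ω := by
  induction ω with
  | nil => exact ⟨[], .refl _, by simp [IsReduced], rfl⟩
  | cons c ω ih =>
    obtain ⟨τ, hτω, hτ, hπ⟩ := ih
    rcases cs.length_simple_mul (π τ) c with hup | hdown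
    · refine ⟨c :: τ, hτω.cons_cons c, ?_, by rw [wordProd_cons, wordProd_cons, hπ]⟩
      rw [IsReduced, wordProd_cons, hup, hτ.eq, List.length_cons]
    · obtain ⟨k, hk, hkπ⟩ := cs.exists_eraseIdx_of_length_lt (by omega : ℓ (s c * π τ) < ℓ (π τ))
      refine ⟨τ.eraseIdx k, (τ.eraseIdx_sublist k).trans (hτω.trans (List.sublist_cons_self c ω)),
        ?_, by rw [← hkπ, hπ, wordProd_cons]⟩
      rw [IsReduced, ← hkπ, List.length_eraseIdx_of_lt hk, ← hτ.eq]
      omega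

theorem wordProd_mem_closure {ω : List B} {i j : B} (hω : ω ⊆ [i, j]) :
    π ω ∈ Subgroup.closure {s i, s j} :=
  Subgroup.list_prod_mem _ fun x hx => by
    obtain ⟨c, hc, rfl⟩ := List.mem_map.1 hx
    rcases List.mem_pair.1 (hω hc) with rfl | rfl
    · exact Subgroup.subset_closure (Set.mem_insert _ _)
    · exact Subgroup.subset_closure (Set.mem_insert_of_mem _ rfl)

theorem exists_reduced_word_of_mem_closure {i j : B} {w : W}
    (hw : w ∈ Subgroup.closure {s i, s j}) :
    ∃ ω, ω ⊆ [i, j] ∧ cs.IsReduced ω ∧ π ω = w := by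
  have hword : ∃ ω, ω ⊆ [i, j] ∧ π ω = w := by
    induction hw using Subgroup.closure_induction with
    | mem x hx =>
      rcases hx with rfl | rfl
      · exact ⟨[i], by simp, by simp⟩
      · exact ⟨[j], by simp, by simp⟩
    | one => exact ⟨[], by simp, rfl⟩
    | mul x y _ _ hx hy =>
      obtain ⟨ω, hω, rfl⟩ := hx
      obtain ⟨ω', hω', rfl⟩ := hy
      exact ⟨ω ++ ω', List.append_subset.2 ⟨hω, hω'⟩, wordProd_append _ _ _⟩
    | inv x _ hx =>
      obtain ⟨ω, hω, rfl⟩ := hx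
      exact ⟨ω.reverse, fun c hc => hω (List.mem_reverse.1 hc), wordProd_reverse _ _⟩
  obtain ⟨ω, hω, rfl⟩ := hword
  obtain ⟨τ, hτω, hτ, hπ⟩ := cs.exists_reduced_sublist ω
  exact ⟨τ, fun c hc => hω (hτω.subset hc), hτ, hπ⟩

theorem length_wordProd_mul_of_forall_le {i j : B} {z : W}
    (hz : ∀ h ∈ Subgroup.closure {s i, s j}, ℓ z ≤ ℓ (h * z)) {ω : List B}
    (hω : cs.IsReduced ω) (hωij : ω ⊆ [i, j]) : ℓ (π ω * z) = ω.length + ℓ z := by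
  induction ω with
  | nil => simp
  | cons c ω ih =>
    have hωij' := List.subset_of_cons_subset hωij
    have ih' := ih (by simpa using hω.drop 1) hωij'
    rw [wordProd_cons, mul_assoc]
    rcases cs.length_simple_mul (π ω * z) c with hup | hdown
    · rw [hup, ih', List.length_cons]
      omega
    exfalso
    obtain ⟨ζ, hζ, rfl⟩ := cs.exists_isReduced z
    obtain ⟨k, hk, hkπ⟩ := cs.exists_eraseIdx_of_length_lt (ω := ω ++ ζ) (c := c)
      (by rw [wordProd_append]; omega)
    rw [List.length_append] at hk
    by_cases hkω : k < ω.length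
    · -- the deleted letter lies in `ω`, contradicting that `c :: ω` is reduced
      rw [List.eraseIdx_append_of_lt_length hkω, wordProd_append, wordProd_append,
        ← mul_assoc] at hkπ
      have hle := cs.length_wordProd_le (ω.eraseIdx k)
      rw [← mul_right_cancel hkπ, ← wordProd_cons, hω.eq, List.length_eraseIdx_of_lt hkω,
        List.length_cons] at hle
      omega
    · -- the deleted letter lies in `ζ`, contradicting the minimality of `π ζ`
      rw [List.eraseIdx_append_of_length_le (not_lt.1 hkω), wordProd_append,
        wordProd_append] at hkπ
      have hmem : (π ω)⁻¹ * s c * π ω ∈ Subgroup.closure {s i, s j} := by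
        rw [mul_assoc, ← wordProd_cons]
        exact mul_mem (inv_mem (cs.wordProd_mem_closure hωij')) (cs.wordProd_mem_closure hωij)
      have heq : (π ω)⁻¹ * s c * π ω * π ζ = π (ζ.eraseIdx (k - ω.length)) := by
        rw [← mul_right_inj (π ω), ← hkπ]
        group
      have hle := cs.length_wordProd_le (ζ.eraseIdx (k - ω.length))
      rw [← heq, List.length_eraseIdx_of_lt (by omega)] at hle
      have hmin := hz _ hmem
      rw [hζ.eq] at hmin
      omega

theorem exists_simple_eq_conj_of_forall_le {i j c : B} {z : W}
    (hz : ∀ h ∈ Subgroup.closure {s i, s j}, ℓ z ≤ ℓ (h * z)) (hzc : ℓ z < ℓ (z * s c))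
    (hK : z * s c * z⁻¹ ∈ Subgroup.closure {s i, s j}) : ∃ d ∈ [i, j], z * s c * z⁻¹ = s d := by
  obtain ⟨ω, hωij, hω, hπ⟩ := cs.exists_reduced_word_of_mem_closure hK
  have hlen := cs.length_wordProd_mul_of_forall_le hz hω hωij
  rw [hπ, show z * s c * z⁻¹ * z = z * s c by group] at hlen
  have hω₁ : ω.length = 1 := by
    rcases cs.length_mul_simple z c with h | h <;> omega
  match ω, hω₁ with
  | [d], _ => exact ⟨d, hωij (List.mem_singleton_self d), by rw [← hπ, wordProd_singleton]⟩

theorem orderOf_simple_mul_simple_of_mem_pair {i j a b : B} (ha : a ∈ [i, j]) (hb : b ∈ [i, j])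
    (hab : s a * s b ≠ 1) : orderOf (s a * s b) = orderOf (s i * s j) := by
  rcases List.mem_pair.1 ha with rfl | rfl <;> rcases List.mem_pair.1 hb with rfl | rfl
  · simp at hab
  · rfl
  · rw [← orderOf_inv, mul_inv_rev, inv_simple, inv_simple]
  · simp at hab

/-- Kilmoyer's theorem in rank two. A minimal-length element `z` of the double coset
`⟨s i, s j⟩ x ⟨s a, s b⟩` conjugates `s a` and `s b` to simple reflections among `s i, s j`. -/
theorem orderOf_simple_mul_simple_eq_of_conj_mem_closure {i j a b : B} {x : W}
    (ha : x * s a * x⁻¹ ∈ Subgroup.closure {s i, s j})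
    (hb : x * s b * x⁻¹ ∈ Subgroup.closure {s i, s j}) (hab : s a * s b ≠ 1) :
    orderOf (s a * s b) = orderOf (s i * s j) := by
  set K := Subgroup.closure {s i, s j}
  set K' := Subgroup.closure {s a, s b}
  have hxK' : K' ≤ K.comap (MulAut.conj x).toMonoidHom :=
    (Subgroup.closure_le _).2 (by rintro _ (rfl | rfl) <;> simpa)
  obtain ⟨z, ⟨y, hy, p, hp, hx⟩, hmin⟩ := (InvImage.wf cs.length wellFounded_lt).has_min
    {w | ∃ y ∈ K, ∃ p ∈ K', x = y * w * p} ⟨x, 1, K.one_mem, 1, K'.one_mem, by group⟩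
  have hzK : ∀ h ∈ K, ℓ z ≤ ℓ (h * z) := fun h hh =>
    not_lt.1 (hmin _ ⟨y * h⁻¹, mul_mem hy (inv_mem hh), p, hp, by rw [hx]; group⟩)
  have hgen : ∀ c ∈ [a, b], ℓ z < ℓ (z * s c) ∧ z * s c * z⁻¹ ∈ K := by
    intro c hc
    have hcK' : s c ∈ K' := by
      rcases List.mem_pair.1 hc with rfl | rfl
      · exact Subgroup.subset_closure (Set.mem_insert _ _)
      · exact Subgroup.subset_closure (Set.mem_insert_of_mem _ rfl)
    constructor
    · refine lt_of_le_of_ne (not_lt.1 (hmin _ ⟨y, hy, s c * p, mul_mem hcK' hp, ?_⟩))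
        (cs.length_mul_simple_ne z c).symm
      simp [hx, mul_assoc]
    · have hconj : z * s c * z⁻¹ = y⁻¹ * (x * (p⁻¹ * s c * p) * x⁻¹) * y := by rw [hx]; group
      rw [hconj]
      exact mul_mem (mul_mem (inv_mem hy) (hxK' (mul_mem (mul_mem (inv_mem hp) hcK') hp))) hy
  obtain ⟨da, hda, hza⟩ := (hgen a (by simp)).elim (cs.exists_simple_eq_conj_of_forall_le hzK)
  obtain ⟨db, hdb, hzb⟩ := (hgen b (by simp)).elim (cs.exists_simple_eq_conj_of_forall_le hzK)
  have hconj : z * (s a * s b) * z⁻¹ = s da * s db := by rw [← hza, ← hzb]; group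
  rw [← orderOf_conj z, hconj]
  refine cs.orderOf_simple_mul_simple_of_mem_pair hda hdb ?_
  rwa [← hconj, Ne, conj_eq_one_iff]

theorem orderOf_mul_eq_of_mem_NSet {u v q : W} {i j : B} (huv : (u, v) ∈ NSet cs)
    (hu : q⁻¹ * u * q ∈ Subgroup.closure {s i, s j})
    (hv : q⁻¹ * v * q ∈ Subgroup.closure {s i, s j}) (h1 : u * v ≠ 1) :
    orderOf (u * v) = orderOf (s i * s j) := by
  obtain ⟨x, a, b, -, -, rfl, rfl⟩ := huv
  have hprod : x * s a * x⁻¹ * (x * s b * x⁻¹) = x * (s a * s b) * x⁻¹ := by group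
  rw [hprod, Ne, conj_eq_one_iff] at h1
  rw [hprod, orderOf_conj]
  refine cs.orderOf_simple_mul_simple_eq_of_conj_mem_closure (x := q⁻¹ * x) ?_ ?_ h1
  · convert hu using 1; group
  · convert hv using 1; group

theorem conj_simple_mul_conj_simple_pow (q : W) (i j : B) :
    (q * s i * q⁻¹ * (q * s j * q⁻¹)) ^ M i j = 1 := by
  rw [show q * s i * q⁻¹ * (q * s j * q⁻¹) = q * (s i * s j) * q⁻¹ by group, conj_pow,
    simple_mul_simple_pow, mul_one, mul_inv_cancel]

theorem rhoWord_sublist_append_reverse {i j : B} {q u v : W} {X Y : List W}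
    (hnd : (X ++ rhoWord (q * s i * q⁻¹) (q * s j * q⁻¹) (M i j) ++ Y).Nodup)
    (huv : (u, v) ∈ NSet cs) (hne : (u, v) ≠ (q * s i * q⁻¹, q * s j * q⁻¹))
    (h : rhoWord u v (orderOf (u * v)) <+
      X ++ rhoWord (q * s i * q⁻¹) (q * s j * q⁻¹) (M i j) ++ Y) :
    rhoWord u v (orderOf (u * v)) <+
      X ++ (rhoWord (q * s i * q⁻¹) (q * s j * q⁻¹) (M i j)).reverse ++ Y := by
  have hpow := cs.conj_simple_mul_conj_simple_pow q i j
  refine (sublist_append_reverse_or_exists_consecutive_mem h).resolve_right ?_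
  rintro ⟨k, hk, hk₀, hk₁⟩
  rw [getElem_rhoWord] at hk₀ hk₁
  have hm : 0 < M i j := by simpa using List.length_pos_of_mem hk₀
  obtain ⟨D, E, hD, hE⟩ := exists_zpow_of_consecutive_mem_rhoWord hk₀ hk₁
  have hord : orderOf (u * v) = M i j := by
    have h1 : u * v ≠ 1 := fun h1 => by simp [h1] at hk
    obtain ⟨hu, hv⟩ := mem_closure_pair_of_eq_zpow hD hE
    have hnd' := hnd.sublist ((List.sublist_append_right X _).trans (List.sublist_append_left _ Y))
    rw [cs.orderOf_mul_eq_of_mem_NSet huv (conj_mem_closure_pair hu) (conj_mem_closure_pair hv) h1,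
      ← orderOf_conj q, ← orderOf_eq_of_nodup_rhoWord hpow hm hnd']
    congr 1
    group
  have hsub := sublist_of_sublist_append_append_of_forall_mem hnd h
    fun x hx => mem_rhoWord_of_eq_zpow hpow hm hD hE hx
  rw [hord] at hsub hk
  refine hne (Prod.ext_iff.2 (eq_of_rhoWord_eq ?_ (hsub.eq_of_length (by simp))))
  simp at hk
  omega

end CoxeterSystem

theorem has_unchanged_of_braid_move_general {B W : Type*} [Group W] {M : CoxeterMatrix B}
    (cs : CoxeterSystem M W) (i j : B) (a b : List B) (ha : cs.IsReduced a) (hb : cs.IsReduced b)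
    (q : W)
    (hrepl : ∃ X Y : List W,
      cs.leftInvSeq a = X ++ (rhoWord (cs.simple i) (cs.simple j) (M.M i j)).map
        (fun x => q * x * q⁻¹) ++ Y ∧
      cs.leftInvSeq b = X ++ ((rhoWord (cs.simple i) (cs.simple j) (M.M i j)).map
        (fun x => q * x * q⁻¹)).reverse ++ Y)
    (u v : W) (huv : (u, v) ∈ NSet cs)
    (h1 : (u, v) ≠ (q * cs.simple i * q⁻¹, q * cs.simple j * q⁻¹))
    (h2 : (u, v) ≠ (q * cs.simple j * q⁻¹, q * cs.simple i * q⁻¹)) :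
    HasFn cs b (u, v) = HasFn cs a (u, v) := by
  obtain ⟨X, Y, hA, hB⟩ := hrepl
  have hrev : (rhoWord (q * cs.simple i * q⁻¹) (q * cs.simple j * q⁻¹) (M.M i j)).reverse =
      rhoWord (q * cs.simple j * q⁻¹) (q * cs.simple i * q⁻¹) (M.M j i) := by
    rw [rhoWord_reverse ((cs.isReflection_simple i).conj q).mul_self
      ((cs.isReflection_simple j).conj q).mul_self (cs.conj_simple_mul_conj_simple_pow q i j),
      M.symmetric]
  rw [rhoWord_map_conj] at hA hB
  rw [hrev] at hB
  refine if_congr ⟨fun hρb => ?_, fun hρa => ?_⟩ rfl rfl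
  · rw [hB] at hρb
    rw [hA, ← List.reverse_reverse (rhoWord _ _ (M.M i j)), hrev]
    exact cs.rhoWord_sublist_append_reverse (hB ▸ hb.nodup_leftInvSeq) huv h2 hρb
  · rw [hA] at hρa
    rw [hB, ← hrev]
    exact cs.rhoWord_sublist_append_reverse (hA ▸ ha.nodup_leftInvSeq) huv h1 hρa

/-- In the situation of a braid move `→a → →b` with conjugator `q`,
setting `s' = qsq⁻¹`, `t' = qtq⁻¹`: for any `(u,v) ∈ 𝔑` with `(u,v) ≠ (s',t')` and
`(u,v) ≠ (t',s')`, one has `has_{u,v} →b = has_{u,v} →a`. -/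
theorem has_unchanged_of_braid_move {B W : Type*} [Group W] {M : CoxeterMatrix B}
    (cs : CoxeterSystem M W) (w : W) (i j : B) (hij : i ≠ j) (hfin : M.M i j ≠ 0)
    (a b : List B)
    (ha : cs.IsReduced a) (haw : cs.wordProd a = w)
    (hb : cs.IsReduced b) (hbw : cs.wordProd b = w)
    (hmove : IsBraidMove cs i j a b)
    (q : W)
    (hrepl : ∃ X Y : List W,
      cs.leftInvSeq a = X ++ (rhoWord (cs.simple i) (cs.simple j) (M.M i j)).map
        (fun x => q * x * q⁻¹) ++ Y ∧
      cs.leftInvSeq b = X ++ ((rhoWord (cs.simple i) (cs.simple j) (M.M i j)).map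
        (fun x => q * x * q⁻¹)).reverse ++ Y)
    (u v : W) (huv : (u, v) ∈ NSet cs)
    (h1 : (u, v) ≠ (q * cs.simple i * q⁻¹, q * cs.simple j * q⁻¹))
    (h2 : (u, v) ≠ (q * cs.simple j * q⁻¹, q * cs.simple i * q⁻¹)) :
    HasFn cs b (u, v) = HasFn cs a (u, v) :=
  has_unchanged_of_braid_move_general cs i j a b ha hb q hrepl u v huv h1 h2
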